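/- In a weight-balanced binary tree storing items with positive weights w_1,…,w_k of total weight W, item i can be stored at depth O(log(W/w_i)); in particular, there exists a binary tree with k leaves where leaf i has depth at most 2 + 2·log2(W/w_i). -/

import Mathlib

open Finset

noncomputable section
open scoped Classical

/-- A finite rooted tree on vertex set `V`: every vertex reaches the root by
iterating the parent map, and the root is its own parent. -/
structure RTree (V : Type) [Fintype V] [DecidableEq V] where
  root : V
  parent : V → V
  parent_root : parent root = root
  reaches_root : ∀ v, ∃ k, parent^[k] v = root

namespace RTree

variable {V : Type} [Fintype V] [DecidableEq V] (T : RTree V)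

/-- `u` is an ancestor of `v` (possibly `u = v`). -/
def Ancestor (u v : V) : Prop := ∃ k, T.parent^[k] v = u

/-- The depth of a vertex: its distance to the root. -/
def depth (v : V) : ℕ := Nat.find (T.reaches_root v)

/-- The height of the tree: the maximum depth. -/
def height : ℕ := Finset.univ.sup T.depth

/-- The number of descendants of `u` (including `u` itself). -/
def desc (u : V) : ℕ := (Finset.univ.filter (fun v => T.Ancestor u v)).card

/-- The tree is binary: every vertex has at most two children. -/
def Binary : Prop :=
  ∀ u : V, (Finset.univ.filter (fun v => v ≠ T.root ∧ T.parent v = u)).card ≤ 2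

/-- `x` is a leaf: it has no children. -/
def IsLeaf (x : V) : Prop := ∀ v : V, v ≠ T.root → T.parent v ≠ x

end RTree

/-!
Sort the items by decreasing weight, so that the item of rank `r` (counted from 1) has
`r * w i ≤ W`, and give it the Elias gamma codeword of `r`, of length
`2 * ⌊log₂ r⌋ + 1 ≤ 1 + 2 * log₂ (W / w i)`. The codewords are prefix-free, so they are exactly
the leaves of the binary tree formed by all their prefixes, and each sits at depth equal to its
length. Binary words are encoded as heap numbers (root `1`, children `2ν` and `2ν + 1`): the
prefixes of `ν` are the `ν / 2 ^ t`, and the length of `ν` is `Nat.log 2 ν`.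
-/

lemma Equiv.conj_iterate_apply {α β : Type*} (e : α ≃ β) (f : α → α) (n : ℕ) (x : α) :
    (e ∘ f ∘ e.symm)^[n] (e x) = e (f^[n] x) :=
  (Function.Semiconj.iterate_right (f := e) (fun y => by simp) n x).symm

namespace RTree

variable {V V' : Type} [Fintype V] [DecidableEq V] [Fintype V'] [DecidableEq V']

lemma depth_eq_iff (T : RTree V) (v : V) (d : ℕ) :
    T.depth v = d ↔ T.parent^[d] v = T.root ∧ ∀ t < d, T.parent^[t] v ≠ T.root :=
  Nat.find_eq_iff _

def congr (T : RTree V) (e : V ≃ V') : RTree V' where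
  root := e T.root
  parent := e ∘ T.parent ∘ e.symm
  parent_root := by simp [T.parent_root]
  reaches_root v := by
    obtain ⟨k, hk⟩ := T.reaches_root (e.symm v)
    exact ⟨k, by simpa [hk] using e.conj_iterate_apply T.parent k (e.symm v)⟩

variable (T : RTree V) (e : V ≃ V')

lemma depth_congr (v : V) : (T.congr e).depth (e v) = T.depth v := by
  rw [depth_eq_iff]
  simp only [congr, e.conj_iterate_apply, e.apply_eq_iff_eq, ne_eq]
  exact (depth_eq_iff T v _).1 rfl

lemma congr_isChild_iff (u v : V) :
    (e v ≠ (T.congr e).root ∧ (T.congr e).parent (e v) = e u) ↔ v ≠ T.root ∧ T.parent v = u := by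
  simp [congr]

lemma isLeaf_congr_iff (x : V) : (T.congr e).IsLeaf (e x) ↔ T.IsLeaf x := by
  simp only [IsLeaf, ← not_and]
  rw [← e.forall_congr_right]
  simp only [congr_isChild_iff]

lemma binary_congr (hT : T.Binary) : (T.congr e).Binary := by
  intro u
  obtain ⟨u, rfl⟩ := e.surjective u
  have hchildren : univ.filter (fun v => v ≠ (T.congr e).root ∧ (T.congr e).parent v = e u) =
      (univ.filter fun v => v ≠ T.root ∧ T.parent v = u).map e.toEmbedding := by
    ext v
    obtain ⟨v, rfl⟩ := e.surjective v
    simp [congr_isChild_iff]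
  rw [hchildren, card_map]
  exact hT u

end RTree

def heapParent (ν : ℕ) : ℕ := max (ν / 2) 1

lemma heapParent_iterate {ν : ℕ} (hν : 0 < ν) (t : ℕ) :
    heapParent^[t] ν = max (ν / 2 ^ t) 1 := by
  induction t with
  | zero => simp only [Function.iterate_zero, id_eq, pow_zero, Nat.div_one]; omega
  | succ t ih =>
    rw [Function.iterate_succ_apply', ih, heapParent, pow_succ, ← Nat.div_div_eq_div_mul]
    generalize ν / 2 ^ t = x
    omega

lemma heapParent_iterate_eq_one_iff {ν : ℕ} (hν : 0 < ν) (t : ℕ) :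
    heapParent^[t] ν = 1 ↔ Nat.log 2 ν ≤ t := by
  rw [heapParent_iterate hν, ← Nat.lt_succ_iff, Nat.log_lt_iff_lt_pow one_lt_two hν.ne',
    pow_succ', ← Nat.div_lt_iff_lt_mul (k := 2 ^ t) (by positivity)]
  generalize ν / 2 ^ t = x
  omega

section HeapTree

def heapTree (S : Finset ℕ) (h0 : 0 ∉ S) (h1 : 1 ∈ S) (hS : ∀ ν ∈ S, heapParent ν ∈ S) :
    RTree S where
  root := ⟨1, h1⟩
  parent ν := ⟨heapParent ν, hS ν ν.2⟩
  parent_root := Subtype.ext (show heapParent 1 = 1 from rfl)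
  reaches_root ν := ⟨Nat.log 2 ν, Subtype.ext <|
    (Function.Semiconj.iterate_right (f := Subtype.val)
      (ga := fun ν : S => ⟨heapParent ν, hS ν ν.2⟩) (gb := heapParent) (fun _ => rfl) _ ν).trans <|
      (heapParent_iterate_eq_one_iff (Nat.pos_of_ne_zero fun h => h0 (h ▸ ν.2)) _).2 le_rfl⟩

variable {S : Finset ℕ} (h0 : 0 ∉ S) (h1 : 1 ∈ S) (hS : ∀ ν ∈ S, heapParent ν ∈ S)

lemma heapTree_parent_iterate_eq_root_iff (ν : S) (t : ℕ) :
    (heapTree S h0 h1 hS).parent^[t] ν = (heapTree S h0 h1 hS).root ↔ Nat.log 2 ν ≤ t := by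
  rw [← heapParent_iterate_eq_one_iff (Nat.pos_of_ne_zero fun h => h0 (h ▸ ν.2)), Subtype.ext_iff,
    ← (Function.Semiconj.iterate_right (f := Subtype.val)
      (ga := (heapTree S h0 h1 hS).parent) (gb := heapParent) (fun _ => rfl) t ν)]
  rfl

lemma depth_heapTree (ν : S) : (heapTree S h0 h1 hS).depth ν = Nat.log 2 ν := by
  simp only [RTree.depth_eq_iff, ne_eq, heapTree_parent_iterate_eq_root_iff]
  exact ⟨le_rfl, fun t ht => by omega⟩

lemma heapTree_isChild_iff (u v : S) :
    (v ≠ (heapTree S h0 h1 hS).root ∧ (heapTree S h0 h1 hS).parent v = u) ↔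
      2 ≤ (v : ℕ) ∧ (v : ℕ) / 2 = u := by
  have hv : (v : ℕ) ≠ 0 := fun h => h0 (h ▸ v.2)
  have hu : (u : ℕ) ≠ 0 := fun h => h0 (h ▸ u.2)
  simp only [heapTree, ne_eq, Subtype.ext_iff, heapParent]
  omega

lemma binary_heapTree : (heapTree S h0 h1 hS).Binary := by
  intro u
  calc _ ≤ ({2 * (u : ℕ), 2 * (u : ℕ) + 1} : Finset ℕ).card := by
        refine card_le_card_of_injOn Subtype.val (fun v hv => ?_) Subtype.val_injective.injOn
        rw [coe_filter, Set.mem_ofPred_eq, heapTree_isChild_iff] at hv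
        simp only [coe_insert, coe_singleton, Set.mem_insert_iff, Set.mem_singleton_iff]
        omega
    _ ≤ 2 := card_le_two

lemma isLeaf_heapTree_iff (u : S) :
    (heapTree S h0 h1 hS).IsLeaf u ↔ ∀ μ ∈ S, 2 ≤ μ → μ / 2 ≠ u := by
  simp only [RTree.IsLeaf, ← not_and, heapTree_isChild_iff, Subtype.forall]

end HeapTree

/-- Exponents `t > a` are not needed: they only produce `a / 2 ^ t = 0`. -/
def heapClosure (A : Finset ℕ) : Finset ℕ :=
  (A.biUnion fun a => (range (a + 1)).image (a / 2 ^ ·)).erase 0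

section HeapClosure

variable {A : Finset ℕ}

lemma mem_heapClosure {ν : ℕ} : ν ∈ heapClosure A ↔ 0 < ν ∧ ∃ a ∈ A, ∃ t, a / 2 ^ t = ν := by
  simp only [heapClosure, mem_erase, mem_biUnion, mem_image, mem_range, Nat.pos_iff_ne_zero]
  refine and_congr_right fun hν => exists_congr fun a => and_congr_right fun _ =>
    ⟨fun ⟨t, _, ht⟩ => ⟨t, ht⟩, fun ⟨t, ht⟩ => ⟨t, ?_, ht⟩⟩
  have : 2 ^ t ≤ a := (Nat.div_pos_iff.1 (ht ▸ Nat.pos_of_ne_zero hν)).2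
  have := Nat.lt_two_pow_self (n := t)
  omega

lemma zero_notMem_heapClosure : 0 ∉ heapClosure A := by
  simp [mem_heapClosure]

lemma one_mem_heapClosure {a : ℕ} (ha : a ∈ A) (ha0 : 0 < a) : 1 ∈ heapClosure A := by
  refine mem_heapClosure.2 ⟨one_pos, a, ha, Nat.log 2 a, Nat.div_eq_of_lt_le ?_ ?_⟩
  · simpa using Nat.pow_log_le_self 2 ha0.ne'
  · simpa [pow_succ'] using Nat.lt_pow_succ_log_self one_lt_two a

lemma heapParent_mem_heapClosure (h1 : 1 ∈ heapClosure A) {ν : ℕ} (hν : ν ∈ heapClosure A) :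
    heapParent ν ∈ heapClosure A := by
  obtain ⟨-, a, ha, t, rfl⟩ := mem_heapClosure.1 hν
  rcases Nat.eq_zero_or_pos (a / 2 ^ t / 2) with h | h
  · simpa [heapParent, h] using h1
  · rw [heapParent, max_eq_left h]
    exact mem_heapClosure.2 ⟨h, a, ha, t + 1, by rw [pow_succ, Nat.div_div_eq_div_mul]⟩

lemma forall_heapClosure_div_two_ne_iff (hA : ∀ a ∈ A, ∀ b ∈ A, ∀ s, 0 < s → a / 2 ^ s ≠ b)
    {ν : ℕ} (hν : ν ∈ heapClosure A) : (∀ μ ∈ heapClosure A, 2 ≤ μ → μ / 2 ≠ ν) ↔ ν ∈ A := by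
  constructor
  · intro hleaf
    obtain ⟨hν0, a, ha, t, rfl⟩ := mem_heapClosure.1 hν
    cases t with
    | zero => simpa using ha
    | succ t =>
      have hdiv : a / 2 ^ t / 2 = a / 2 ^ (t + 1) := by rw [pow_succ, Nat.div_div_eq_div_mul]
      exact absurd hdiv <| hleaf _ (mem_heapClosure.2 ⟨by omega, a, ha, t, rfl⟩) (by omega)
  · rintro hνA μ hμ - rfl
    obtain ⟨-, b, hb, t, rfl⟩ := mem_heapClosure.1 hμ
    exact hA b hb _ hνA (t + 1) t.succ_pos (by rw [pow_succ, Nat.div_div_eq_div_mul])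

end HeapClosure

theorem exists_binary_rtree_of_antichain {ι : Type} [Fintype ι] [Nonempty ι] (a : ι → ℕ)
    (ha_inj : Function.Injective a) (ha_pos : ∀ i, 0 < a i)
    (ha_anti : ∀ i j s, 0 < s → a i / 2 ^ s ≠ a j) :
    ∃ (m : ℕ) (B : RTree (Fin m)) (f : ι ↪ Fin m),
      B.Binary ∧ (∀ x, B.IsLeaf x ↔ ∃ i, f i = x) ∧ ∀ i, B.depth (f i) = Nat.log 2 (a i) := by
  set A := univ.image a
  obtain ⟨i₀⟩ := ‹Nonempty ι›
  have h1 : 1 ∈ heapClosure A := one_mem_heapClosure (mem_image_of_mem a (mem_univ i₀)) (ha_pos i₀)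
  have hmem : ∀ i, a i ∈ heapClosure A := fun i =>
    mem_heapClosure.2 ⟨ha_pos i, a i, mem_image_of_mem a (mem_univ i), 0, Nat.div_one _⟩
  have hA : ∀ a ∈ A, ∀ b ∈ A, ∀ s, 0 < s → a / 2 ^ s ≠ b := by
    simpa [A] using ha_anti
  set T := heapTree _ zero_notMem_heapClosure h1 fun _ => heapParent_mem_heapClosure h1
  set e := Fintype.equivFin (heapClosure A)
  refine ⟨_, T.congr e, ⟨fun i => e ⟨a i, hmem i⟩, fun i j h => ha_inj (by simpa using h)⟩,
    T.binary_congr e (binary_heapTree _ _ _), fun x => ?_, fun i => ?_⟩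
  · obtain ⟨ν, rfl⟩ := e.surjective x
    rw [T.isLeaf_congr_iff, isLeaf_heapTree_iff, forall_heapClosure_div_two_ne_iff hA ν.2]
    simp only [A, mem_image, mem_univ, true_and]
    exact exists_congr fun i =>
      ⟨fun h => congrArg e (Subtype.ext h), fun h => congrArg Subtype.val (e.injective h)⟩
  · exact (T.depth_congr e _).trans (depth_heapTree ..)

/-- In binary: a leading `1`, then `⌊log₂ n⌋` zeros, then the `⌊log₂ n⌋ + 1` digits of `n`. -/
def gammaCode (n : ℕ) : ℕ := 2 ^ (2 * Nat.log 2 n + 1) + n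

lemma log_gammaCode (n : ℕ) : Nat.log 2 (gammaCode n) = 2 * Nat.log 2 n + 1 := by
  refine Nat.log_eq_of_pow_le_of_lt_pow (Nat.le_add_right _ _) ?_
  have hn := Nat.lt_pow_succ_log_self one_lt_two n
  have hle : 2 ^ (Nat.log 2 n + 1) ≤ 2 ^ (2 * Nat.log 2 n + 1) :=
    Nat.pow_le_pow_right two_pos (by omega)
  rw [gammaCode, pow_succ 2 (2 * _ + 1)]
  omega

lemma gammaCode_injective : Function.Injective gammaCode := by
  intro m n h
  have hlog : Nat.log 2 m = Nat.log 2 n := by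
    have := log_gammaCode m
    rw [h, log_gammaCode] at this
    omega
  simpa [gammaCode, hlog] using h

lemma gammaCode_div_two_pow_ne (m : ℕ) {n s : ℕ} (hn : 0 < n) (hs : 0 < s) :
    gammaCode m / 2 ^ s ≠ gammaCode n := by
  intro h
  have hlog : 2 * Nat.log 2 m + 1 - s = 2 * Nat.log 2 n + 1 := by
    rw [← log_gammaCode, ← log_gammaCode, ← h, Nat.log_div_base_pow]
  rw [gammaCode, gammaCode] at h
  set L := Nat.log 2 n
  set L' := Nat.log 2 m
  have hsplit : 2 ^ (2 * L' + 1) = 2 ^ (2 * L + 1) * 2 ^ s := by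
    rw [← pow_add]
    congr 1
    omega
  rw [hsplit, add_comm, Nat.add_mul_div_right _ _ (by positivity)] at h
  replace h : m / 2 ^ s = n := by omega
  have hlt : 2 ^ (L + s) < 2 ^ (L' + 1) :=
    calc 2 ^ (L + s) = 2 ^ L * 2 ^ s := pow_add ..
      _ ≤ n * 2 ^ s := Nat.mul_le_mul_right _ (Nat.pow_log_le_self 2 hn.ne')
      _ ≤ m := h ▸ Nat.div_mul_le_self m _
      _ < 2 ^ (L' + 1) := Nat.lt_pow_succ_log_self one_lt_two m
  have := (Nat.pow_lt_pow_iff_right one_lt_two).1 hlt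
  omega

lemma exists_equiv_succ_nsmul_le_sum {M : Type*} [AddCommMonoid M] [LinearOrder M]
    [IsOrderedAddMonoid M] {k : ℕ} (w : Fin k → M) (hw : ∀ i, 0 ≤ w i) :
    ∃ σ : Fin k ≃ Fin k, ∀ i, ((σ i : ℕ) + 1) • w i ≤ ∑ j, w j := by
  set τ := Tuple.sort (OrderDual.toDual ∘ w)
  have hanti : Antitone (w ∘ τ) := Tuple.monotone_sort (OrderDual.toDual ∘ w)
  refine ⟨τ.symm, fun i => ?_⟩
  calc ((τ.symm i : ℕ) + 1) • w i = #(Iic (τ.symm i)) • w (τ (τ.symm i)) := by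
        rw [Fin.card_Iic, τ.apply_symm_apply]
    _ ≤ ∑ q ∈ Iic (τ.symm i), w (τ q) :=
        card_nsmul_le_sum _ _ _ fun q hq => hanti (mem_Iic.1 hq)
    _ ≤ ∑ q, w (τ q) := sum_le_univ_sum_of_nonneg fun q => hw _
    _ = ∑ j, w j := Equiv.sum_comp τ w

/-- Weight-balanced binary trees exist: for positive weights
`w 0, …, w (k-1)` of total weight `W`, there is a binary tree whose leaves are exactly
the `k` items, with item `i` stored at depth at most `2 + 2 * log₂ (W / w i)`. -/
theorem weight_balanced_tree_exists (k : ℕ) (hk : 0 < k) (w : Fin k → ℝ)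
    (hw : ∀ i, 0 < w i) :
    ∃ (m : ℕ) (B : RTree (Fin m)) (f : Fin k ↪ Fin m),
      B.Binary ∧ (∀ x : Fin m, B.IsLeaf x ↔ ∃ i, f i = x) ∧
      ∀ i : Fin k,
        (B.depth (f i) : ℝ) ≤ 2 + 2 * Real.logb 2 ((∑ j, w j) / w i) := by
  obtain ⟨σ, hσ⟩ := exists_equiv_succ_nsmul_le_sum w fun i => (hw i).le
  have : Nonempty (Fin k) := ⟨⟨0, hk⟩⟩
  obtain ⟨m, B, f, hB, hleaf, hdepth⟩ := exists_binary_rtree_of_antichain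
    (fun i => gammaCode (σ i + 1))
    (fun _ _ h => σ.injective (Fin.ext (by simpa using gammaCode_injective h)))
    (fun _ => Nat.add_pos_right _ (Nat.succ_pos _))
    (fun _ _ _ hs => gammaCode_div_two_pow_ne _ (Nat.succ_pos _) hs)
  refine ⟨m, B, f, hB, hleaf, fun i => ?_⟩
  have hrank : ((σ i + 1 : ℕ) : ℝ) ≤ (∑ j, w j) / w i := by
    rw [le_div_iff₀ (hw i), ← nsmul_eq_mul]
    exact hσ i
  have hlog := (Real.natLog_le_logb (σ i + 1) 2).trans
    (Real.logb_le_logb_of_le one_lt_two (by positivity) hrank)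
  rw [hdepth, log_gammaCode]
  push_cast at hlog ⊢
  linarith
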